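/- There exists an invertible x ∈ M_n(ℂ) and λ ∈ ℂ such that the two elements x ⊕ λx and λxᵀ ⊕ xᵀ generate M_n(ℂ) ⊕ M_n(ℂ) as a unital ℂ-algebra. -/

import Mathlib

/-!
Take for `x` the weighted cyclic shift `e_j ↦ a_j e_{j+1}` with nonzero weights whose squares
are pairwise distinct. Then `xᵀ x = diag (a_j²)` has distinct eigenvalues, so its polynomials
contain every diagonal matrix unit `E_jj`, and `E_{j+1,j+1} x E_jj` is a nonzero multiple of
`E_{j+1,j}`; walking around the cycle produces all matrix units, so `x` and `xᵀ` generate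
`M_n(ℂ)`. Moreover `xⁿ = (∏ a_j) • 1`, so the `n`-th power of `x ⊕ λx` is the scalar pair
`(C, λⁿ C)`. When `λⁿ ≠ 1` a linear combination of it and `1` is the central idempotent `1 ⊕ 0`,
and multiplying by `1 ⊕ 0` and `0 ⊕ 1` separates the two coordinates, each of which is generated
by `x` and `xᵀ` up to nonzero scalars.
-/

open Matrix

section ProdAlgebra

variable {R A B : Type*} [CommRing R] [Ring A] [Ring B] [Algebra R A] [Algebra R B]

theorem Subalgebra.eq_top_of_inl_one_mem {S : Subalgebra R (A × B)}
    (h : ((1 : A), (0 : B)) ∈ S) (hA : S.map (AlgHom.fst R A B) = ⊤)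
    (hB : S.map (AlgHom.snd R A B) = ⊤) : S = ⊤ := by
  refine eq_top_iff.mpr fun ⟨a, b⟩ _ => ?_
  obtain ⟨p, hp, rfl⟩ : ∃ p ∈ S, p.1 = a := by simpa using hA.ge (Algebra.mem_top (x := a))
  obtain ⟨q, hq, rfl⟩ : ∃ q ∈ S, q.2 = b := by simpa using hB.ge (Algebra.mem_top (x := b))
  have hpq : ((p.1, q.2) : A × B) = p * (1, 0) + q * (1 - (1, 0)) := by
    ext <;> simp
  rw [hpq]
  exact add_mem (mul_mem hp h) (mul_mem hq (sub_mem (one_mem S) h))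

theorem Subalgebra.inl_one_mem_of_algebraMap_mem {K : Type*} [Field K] [Algebra K A]
    [Algebra K B] {S : Subalgebra K (A × B)} {c d : K} (hcd : c ≠ d)
    (h : (algebraMap K A c, algebraMap K B d) ∈ S) : ((1 : A), (0 : B)) ∈ S := by
  have key : ((1 : A), (0 : B)) =
      (c - d)⁻¹ • ((algebraMap K A c, algebraMap K B d) - algebraMap K (A × B) d) := by
    ext <;> simp [Algebra.algebraMap_eq_smul_one, ← sub_smul, smul_smul,
      inv_mul_cancel₀ (sub_ne_zero.mpr hcd)]
  rw [key]
  exact S.smul_mem (sub_mem h (S.algebraMap_mem d)) _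

end ProdAlgebra

theorem Algebra.adjoin_pair_smul_right {K A : Type*} [Field K] [Semiring A] [Algebra K A]
    (a b : A) {c : K} (hc : c ≠ 0) : Algebra.adjoin K {a, c • b} = Algebra.adjoin K {a, b} := by
  refine le_antisymm (Algebra.adjoin_le ?_) (Algebra.adjoin_le ?_) <;>
    simp only [Set.insert_subset_iff, Set.singleton_subset_iff, SetLike.mem_coe]
  · exact ⟨Algebra.subset_adjoin (by simp),
      Subalgebra.smul_mem _ (Algebra.subset_adjoin (by simp)) c⟩
  · have hcb : c • b ∈ Algebra.adjoin K {a, c • b} := Algebra.subset_adjoin (by simp)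
    refine ⟨Algebra.subset_adjoin (by simp), ?_⟩
    simpa [smul_smul, inv_mul_cancel₀ hc] using Subalgebra.smul_mem _ hcb c⁻¹

theorem Algebra.adjoin_prod_pair_eq_top {K A : Type*} [Field K] [Ring A] [Algebra K A] {x y : A}
    (hxy : Algebra.adjoin K {x, y} = ⊤) {n : ℕ} {C lam : K} (hxn : x ^ n = algebraMap K A C)
    (hC : C ≠ 0) (hlam : lam ≠ 0) (hlamn : lam ^ n ≠ 1) :
    Algebra.adjoin K {((x, lam • x) : A × A), (lam • y, y)} = ⊤ := by
  apply Subalgebra.eq_top_of_inl_one_mem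
  · have hC' : C ≠ lam ^ n * C := fun h =>
      hlamn (mul_right_cancel₀ hC (by rw [← h, one_mul]))
    apply Subalgebra.inl_one_mem_of_algebraMap_mem hC'
    have hu := pow_mem (Algebra.subset_adjoin (Set.mem_insert _ _) :
      ((x, lam • x) : A × A) ∈ Algebra.adjoin K {((x, lam • x) : A × A), (lam • y, y)}) n
    rwa [map_mul, ← Algebra.smul_def, ← hxn, ← smul_pow, ← Prod.pow_mk]
  · simp only [AlgHom.map_adjoin, Set.image_pair, AlgHom.fst_apply]
    rw [Algebra.adjoin_pair_smul_right _ _ hlam, hxy]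
  · simp only [AlgHom.map_adjoin, Set.image_pair, AlgHom.snd_apply]
    rw [Set.pair_comm, Algebra.adjoin_pair_smul_right _ _ hlam, Set.pair_comm, hxy]

theorem Fin.induction_add_one {n : ℕ} [NeZero n] {P : Fin n → Prop} {j : Fin n} (base : P j)
    (step : ∀ i, P i → P (i + 1)) (i : Fin n) : P i := by
  open Fin.NatCast in
  have key (m : ℕ) : P (j + m) := by
    induction m with
    | zero => simpa using base
    | succ m ih => simpa [add_assoc] using step _ ih
  simpa using key (i - j).val

namespace Matrix

section Diagonal

variable {ι : Type*} [Fintype ι] [DecidableEq ι]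

theorem aeval_diagonal {K : Type*} [Field K] (d : ι → K) (p : Polynomial K) :
    Polynomial.aeval (diagonal d) p = diagonal fun i => p.eval (d i) := by
  rw [← diagonalAlgHom_apply K, Polynomial.aeval_algHom_apply, Polynomial.aeval_pi_apply]
  simp

theorem single_one_mem_adjoin_diagonal {K : Type*} [Field K] {d : ι → K}
    (hd : Function.Injective d) (j : ι) :
    single j j (1 : K) ∈ Algebra.adjoin K {diagonal d} := by
  have key : single j j (1 : K) = diagonal fun i => (Lagrange.basis .univ d j).eval (d i) := by
    ext a b
    rcases eq_or_ne a b with rfl | hab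
    · rcases eq_or_ne a j with rfl | haj
      · simp [Lagrange.eval_basis_self hd.injOn]
      · simp [single_apply_of_ne, Ne.symm haj]
    · simp only [diagonal_apply_ne _ hab, single_apply, ite_eq_right_iff]
      rintro ⟨rfl, rfl⟩
      exact absurd rfl hab
  rw [key, ← aeval_diagonal]
  exact Polynomial.aeval_mem_adjoin_singleton K _

theorem _root_.Subalgebra.eq_top_of_single_one_mem {R : Type*} [CommSemiring R]
    {S : Subalgebra R (Matrix ι ι R)} (h : ∀ i j, single i j (1 : R) ∈ S) : S = ⊤ := by
  refine eq_top_iff.mpr fun M _ => ?_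
  rw [matrix_eq_sum_single M]
  exact sum_mem fun i _ => sum_mem fun j _ => by simpa using S.smul_mem (h i j) (M i j)

end Diagonal

section WeightedShift

variable {K : Type*} [Field K] {n : ℕ} [NeZero n]

theorem _root_.Subalgebra.eq_top_of_single_diag_mem_of_apply_add_one_ne_zero
    {S : Subalgebra K (Matrix (Fin n) (Fin n) K)} (hdiag : ∀ j, single j j (1 : K) ∈ S)
    {M : Matrix (Fin n) (Fin n) K} (hM : M ∈ S) (hM1 : ∀ j, M (j + 1) j ≠ 0) : S = ⊤ := by
  have hstep (j : Fin n) : single (j + 1) j (1 : K) ∈ S := by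
    have := S.smul_mem (mul_mem (mul_mem (hdiag (j + 1)) hM) (hdiag j)) (M (j + 1) j)⁻¹
    rwa [single_mul_mul_single, one_mul, mul_one, smul_single, smul_eq_mul,
      inv_mul_cancel₀ (hM1 j)] at this
  refine Subalgebra.eq_top_of_single_one_mem fun i j => ?_
  induction i using Fin.induction_add_one (j := j) with
  | base => exact hdiag j
  | step i hi => simpa using mul_mem (hstep i) hi

def weightedShift (a : Fin n → K) : Matrix (Fin n) (Fin n) K :=
  of fun i j => if i = j + 1 then a j else 0

variable (a : Fin n → K)

@[simp]
theorem weightedShift_apply_add_one (j : Fin n) : weightedShift a (j + 1) j = a j := by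
  simp [weightedShift]

theorem transpose_weightedShift_mul_self :
    (weightedShift a)ᵀ * weightedShift a = diagonal fun j => a j ^ 2 := by
  ext j l
  rw [mul_apply, Finset.sum_eq_single (j + 1)]
  · rcases eq_or_ne j l with rfl | hjl
    · simp [sq]
    · simp [weightedShift, hjl]
  · intro i _ hi
    simp [weightedShift, hi]
  · simp

theorem weightedShift_mul_single (k j : Fin n) (c : K) :
    weightedShift a * single k j c = single (k + 1) j (a k * c) := by
  ext p q
  rw [mul_apply, Finset.sum_eq_single k]
  · by_cases hp : p = k + 1 <;> by_cases hq : q = j <;>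
      simp [weightedShift, single_apply, hp, hq, eq_comm]
  · intro i _ hi
    simp [hi.symm]
  · simp

open Fin.NatCast in
theorem weightedShift_pow_mul_single (m : ℕ) (k j : Fin n) (c : K) :
    weightedShift a ^ m * single k j c =
      single (k + m) j ((∏ t ∈ Finset.range m, a (k + t)) * c) := by
  induction m generalizing k c with
  | zero => simp
  | succ m ih =>
    rw [pow_succ, mul_assoc, weightedShift_mul_single, ih, Finset.prod_range_succ', ← mul_assoc]
    simp only [Nat.cast_add, Nat.cast_one, Nat.cast_zero, add_zero, add_right_comm _ (1 : Fin n),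
      add_assoc]

theorem weightedShift_pow_self : weightedShift a ^ n = algebraMap K _ (∏ j, a j) := by
  open Fin.NatCast in
  have hprod (j : Fin n) : ∏ t ∈ Finset.range n, a (j + t) = ∏ i, a i := by
    rw [← Fin.prod_univ_eq_prod_range (fun t => a (j + t))]
    simpa using Equiv.prod_comp (Equiv.addLeft j) a
  rw [algebraMap_eq_diagonal, ← sum_single_eq_diagonal, ← mul_one (weightedShift a ^ n),
    ← sum_single_one, Finset.mul_sum]
  simp [weightedShift_pow_mul_single, hprod]

theorem adjoin_weightedShift_transpose_eq_top {a : Fin n → K} (ha : ∀ j, a j ≠ 0)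
    (hinj : Function.Injective fun j => a j ^ 2) :
    Algebra.adjoin K {weightedShift a, (weightedShift a)ᵀ} = ⊤ := by
  set S := Algebra.adjoin K {weightedShift a, (weightedShift a)ᵀ}
  have hW : weightedShift a ∈ S := Algebra.subset_adjoin (by simp)
  have hWT : (weightedShift a)ᵀ ∈ S := Algebra.subset_adjoin (by simp)
  have hD : Algebra.adjoin K {diagonal fun j => a j ^ 2} ≤ S := by
    rw [Algebra.adjoin_le_iff, Set.singleton_subset_iff, ← transpose_weightedShift_mul_self]
    exact mul_mem hWT hW
  exact Subalgebra.eq_top_of_single_diag_mem_of_apply_add_one_ne_zero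
    (fun j => hD (single_one_mem_adjoin_diagonal hinj j)) hW (by simpa using ha)

end WeightedShift

end Matrix

theorem stmt16 (n : ℕ) (hn : 1 ≤ n) :
    ∃ (x : Matrix (Fin n) (Fin n) ℂ) (lam : ℂ), IsUnit x ∧
      Algebra.adjoin ℂ
        ({((x, lam • x) : Matrix (Fin n) (Fin n) ℂ × Matrix (Fin n) (Fin n) ℂ),
          (lam • xᵀ, xᵀ)} :
          Set (Matrix (Fin n) (Fin n) ℂ × Matrix (Fin n) (Fin n) ℂ)) = ⊤ := by
  have : NeZero n := ⟨by omega⟩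
  obtain ⟨a, ha, hinj⟩ :
      ∃ a : Fin n → ℂ, (∀ j, a j ≠ 0) ∧ Function.Injective fun j => a j ^ 2 := by
    refine ⟨fun j => ((j : ℕ) : ℂ) + 1, fun j => Nat.cast_add_one_ne_zero _,
      fun j k h => Fin.ext ?_⟩
    have h' : (((j + 1 : ℕ) ^ 2 : ℕ) : ℂ) = (((k + 1 : ℕ) ^ 2 : ℕ) : ℂ) := by
      push_cast
      exact h
    simpa using Nat.pow_left_injective two_ne_zero (Nat.cast_inj.mp h')
  have hC : ∏ j, a j ≠ 0 := Finset.prod_ne_zero_iff.mpr fun j _ => ha j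
  have hpow : (2 : ℂ) ^ n ≠ 1 := by
    exact_mod_cast (Nat.one_lt_two_pow (by omega)).ne'
  refine ⟨weightedShift a, 2, ?_, ?_⟩
  · rw [← isUnit_pow_iff (by omega : n ≠ 0), weightedShift_pow_self]
    exact (isUnit_iff_ne_zero.mpr hC).map _
  · exact Algebra.adjoin_prod_pair_eq_top (adjoin_weightedShift_transpose_eq_top ha hinj)
      (weightedShift_pow_self a) hC two_ne_zero hpow
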